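/- Let p be a prime, and let g ∈ H(ℚ_p) be the upper unitriangular 3×3 matrix with (1,2)-entry a, (2,3)-entry b, and (1,3)-entry α (a, b, α ∈ ℚ_p). Then [H(ℤ_p) : H(ℤ_p) ∩ H(ℤ_p)^g] = max{p^{−v(a)}, p^{−v(b)}, 1}, where v denotes the p-adic valuation. -/

import Mathlib

/-!
For `x ∈ H(ℤ_p)`, conjugating by `g = (a, b, α)` only shifts the central entry by
`a * x.b - x.a * b`, so `H(ℤ_p) ∩ H(ℤ_p)^g` pulls back to the set of `x` on which this symplectic
pairing is integral. Let `p ^ n = max ‖a‖ ‖b‖ 1`. Then `a' = p ^ n a` and `b' = p ^ n b` are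
integral, and the condition says that `a' * x.b - x.a * b'` vanishes mod `p ^ n`. Unless `n = 0`,
one of `a'`, `b'` is a unit, so this character `H(ℤ_p) → ℤ/p^n` is onto and its kernel has
index `p ^ n`.
-/

/-- The conjugate subgroup `A ^ g = g⁻¹ A g`. -/
def conjSubgroup {G : Type*} [Group G] (g : G) (A : Subgroup G) : Subgroup G :=
  A.map (MulAut.conj g⁻¹).toMonoidHom

/-- The Heisenberg group over a commutative ring `R`: the group of upper unitriangular
`3 × 3` matrices `[[1, a, c], [0, 1, b], [0, 0, 1]]`, recorded by the triple `(a, b, c)`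
of its above-diagonal entries (the `(1,2)`, `(2,3)` and `(1,3)` entries respectively). -/
@[ext]
structure Heisenberg (R : Type*) where
  a : R
  b : R
  c : R

namespace Heisenberg

variable {R : Type*} [CommRing R]

instance : Mul (Heisenberg R) := ⟨fun x y => ⟨x.a + y.a, x.b + y.b, x.c + y.c + x.a * y.b⟩⟩
instance : One (Heisenberg R) := ⟨⟨0, 0, 0⟩⟩
instance : Inv (Heisenberg R) := ⟨fun x => ⟨-x.a, -x.b, x.a * x.b - x.c⟩⟩

@[simp] theorem mul_a (x y : Heisenberg R) : (x * y).a = x.a + y.a := rfl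
@[simp] theorem mul_b (x y : Heisenberg R) : (x * y).b = x.b + y.b := rfl
@[simp] theorem mul_c (x y : Heisenberg R) : (x * y).c = x.c + y.c + x.a * y.b := rfl
@[simp] theorem one_a : (1 : Heisenberg R).a = 0 := rfl
@[simp] theorem one_b : (1 : Heisenberg R).b = 0 := rfl
@[simp] theorem one_c : (1 : Heisenberg R).c = 0 := rfl
@[simp] theorem inv_a (x : Heisenberg R) : x⁻¹.a = -x.a := rfl
@[simp] theorem inv_b (x : Heisenberg R) : x⁻¹.b = -x.b := rfl
@[simp] theorem inv_c (x : Heisenberg R) : x⁻¹.c = x.a * x.b - x.c := rfl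

instance : Group (Heisenberg R) where
  mul_assoc x y z := by ext <;> simp <;> ring
  one_mul x := by ext <;> simp
  mul_one x := by ext <;> simp
  inv_mul_cancel x := by ext <;> simp [mul_comm]

/-- The group homomorphism `H(R) → H(S)` induced by a ring homomorphism `R → S`. -/
def map {S : Type*} [CommRing S] (f : R →+* S) : Heisenberg R →* Heisenberg S where
  toFun x := ⟨f x.a, f x.b, f x.c⟩
  map_one' := by ext <;> simp
  map_mul' x y := by ext <;> simp

end Heisenberg

/-- `H(ℤ_p)` as a subgroup of `H(ℚ_p)`: the image of the Heisenberg group over the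
`p`-adic integers under the coefficient embedding `ℤ_p → ℚ_p`. -/
noncomputable def heisenbergInt (p : ℕ) [Fact p.Prime] : Subgroup (Heisenberg ℚ_[p]) :=
  (Heisenberg.map (PadicInt.Coe.ringHom (p := p))).range

open PadicInt

namespace Heisenberg

variable {R : Type*} [CommRing R]

theorem mul_mul_inv (g x : Heisenberg R) :
    g * x * g⁻¹ = ⟨x.a, x.b, x.c + (g.a * x.b - x.a * g.b)⟩ := by
  ext <;> simp
  ring

def symplecticHom (s t : R) : Heisenberg R →* Multiplicative R where
  toFun x := .ofAdd (s * x.b - x.a * t)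
  map_one' := by simp only [one_a, one_b, mul_zero, zero_mul, sub_zero]; rfl
  map_mul' x y := by simp only [mul_a, mul_b, ← ofAdd_add]; ring_nf

theorem symplecticHom_surjective {s t : R} (h : IsUnit s ∨ IsUnit t) :
    Function.Surjective (symplecticHom s t) := by
  rcases h with ⟨u, rfl⟩ | ⟨u, rfl⟩
  · intro r
    refine ⟨⟨0, ↑u⁻¹ * r.toAdd, 0⟩, ?_⟩
    simp [symplecticHom]
  · intro r
    refine ⟨⟨-(r.toAdd * ↑u⁻¹), 0, 0⟩, ?_⟩
    simp [symplecticHom]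

end Heisenberg

theorem mem_conjSubgroup {G : Type*} [Group G] {g x : G} {A : Subgroup G} :
    x ∈ conjSubgroup g A ↔ g * x * g⁻¹ ∈ A := by
  rw [conjSubgroup, Subgroup.mem_map_equiv]
  simp only [map_inv, MulAut.inv_symm, MulAut.conj_apply]

section Padic

variable {p : ℕ} [Fact p.Prime]

theorem mem_heisenbergInt {x : Heisenberg ℚ_[p]} :
    x ∈ heisenbergInt p ↔ ‖x.a‖ ≤ 1 ∧ ‖x.b‖ ≤ 1 ∧ ‖x.c‖ ≤ 1 := by
  constructor
  · rintro ⟨y, rfl⟩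
    exact ⟨y.a.2, y.b.2, y.c.2⟩
  · rintro ⟨ha, hb, hc⟩
    exact ⟨⟨⟨x.a, ha⟩, ⟨x.b, hb⟩, ⟨x.c, hc⟩⟩, rfl⟩

theorem mem_comap_conjSubgroup_heisenbergInt {g : Heisenberg ℚ_[p]} {x : Heisenberg ℤ_[p]} :
    x ∈ (conjSubgroup g (heisenbergInt p)).comap (Heisenberg.map (Coe.ringHom (p := p))) ↔
      ‖g.a * x.b - x.a * g.b‖ ≤ 1 := by
  rw [Subgroup.mem_comap, mem_conjSubgroup, Heisenberg.mul_mul_inv, mem_heisenbergInt]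
  exact (and_iff_right x.a.2).trans <| (and_iff_right x.b.2).trans <|
    add_mem_cancel_left (show (x.c : ℚ_[p]) ∈ subring p from x.c.2)

noncomputable def symplecticHomMod (n : ℕ) (a' b' : ℤ_[p]) :
    Heisenberg ℤ_[p] →* Multiplicative (ZMod (p ^ n)) :=
  (toZModPow n).toAddMonoidHom.toMultiplicative.comp (Heisenberg.symplecticHom a' b')

theorem norm_p_pow_mul (n : ℕ) (u : ℚ_[p]) : ‖(p : ℚ_[p]) ^ n * u‖ = ‖u‖ / (p : ℝ) ^ n := by
  rw [norm_mul, Padic.norm_p_pow, zpow_neg, zpow_natCast, inv_mul_eq_div]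

theorem mem_ker_symplecticHomMod {n : ℕ} {a b : ℚ_[p]} {a' b' : ℤ_[p]}
    (ha : (a' : ℚ_[p]) = p ^ n * a) (hb : (b' : ℚ_[p]) = p ^ n * b) {x : Heisenberg ℤ_[p]} :
    x ∈ (symplecticHomMod n a' b').ker ↔ ‖a * x.b - x.a * b‖ ≤ 1 := by
  have hp : (0 : ℝ) < (p : ℝ) ^ n := by have := (Fact.out : p.Prime).pos; positivity
  rw [MonoidHom.mem_ker]
  change toZModPow n (a' * x.b - x.a * b') = 0 ↔ _
  rw [← RingHom.mem_ker, ker_toZModPow, ← norm_le_pow_iff_mem_span_pow, norm_def]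
  push_cast
  rw [ha, hb, show (p : ℚ_[p]) ^ n * a * x.b - x.a * (p ^ n * b) =
      p ^ n * (a * x.b - x.a * b) by ring, norm_p_pow_mul, zpow_neg, zpow_natCast, div_le_iff₀ hp, inv_mul_cancel₀ hp.ne']

theorem relIndex_conjSubgroup_heisenbergInt {g : Heisenberg ℚ_[p]} {n : ℕ} {a' b' : ℤ_[p]}
    (ha : (a' : ℚ_[p]) = p ^ n * g.a) (hb : (b' : ℚ_[p]) = p ^ n * g.b) :
    (conjSubgroup g (heisenbergInt p)).relIndex (heisenbergInt p) =
      (symplecticHomMod n a' b').ker.index := by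
  refine (Subgroup.index_comap _ _).symm.trans (congrArg Subgroup.index ?_)
  ext x
  rw [mem_comap_conjSubgroup_heisenbergInt, mem_ker_symplecticHomMod ha hb]

theorem index_ker_symplecticHomMod {n : ℕ} {a' b' : ℤ_[p]} (h : n = 0 ∨ IsUnit a' ∨ IsUnit b') :
    (symplecticHomMod n a' b').ker.index = p ^ n := by
  have hsurj : Function.Surjective (symplecticHomMod n a' b') := by
    rcases h with rfl | h
    · have := ZMod.subsingleton_iff.mpr (pow_zero p)
      exact Function.surjective_to_subsingleton _
    · exact (ZMod.ringHom_surjective (toZModPow n)).comp (Heisenberg.symplecticHom_surjective h)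
  rw [Subgroup.index_ker, MonoidHom.range_eq_top.mpr hsurj, Subgroup.card_top]
  exact Nat.card_zmod _

theorem exists_scaled_padicInt {n : ℕ} {u : ℚ_[p]} (h : ‖u‖ ≤ (p : ℝ) ^ n) :
    ∃ u' : ℤ_[p], (u' : ℚ_[p]) = p ^ n * u ∧ (‖u‖ = (p : ℝ) ^ n → IsUnit u') := by
  have hp : (0 : ℝ) < (p : ℝ) ^ n := by have := (Fact.out : p.Prime).pos; positivity
  refine ⟨(⟨p ^ n * u, ?_⟩ : ℤ_[p]), rfl, fun hu => isUnit_iff.mpr ?_⟩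
  · rw [norm_p_pow_mul]; exact (div_le_one hp).mpr h
  · change ‖(p : ℚ_[p]) ^ n * u‖ = 1
    rw [norm_p_pow_mul, hu, div_self hp.ne']

theorem exists_norm_eq_pow_of_one_le {x : ℚ_[p]} (h : 1 ≤ ‖x‖) : ∃ n : ℕ, ‖x‖ = (p : ℝ) ^ n := by
  have hx : x ≠ 0 := by rintro rfl; norm_num at h
  have hp : (1 : ℝ) < p := by exact_mod_cast (Fact.out : p.Prime).one_lt
  rw [Padic.norm_eq_zpow_neg_valuation hx] at h ⊢
  refine ⟨(-x.valuation).toNat, ?_⟩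
  rw [← zpow_natCast, Int.toNat_of_nonneg ((one_le_zpow_iff_right₀ hp).mp h)]

theorem exists_max_norm_eq_pow (a b : ℚ_[p]) : ∃ n : ℕ,
    max (max ‖a‖ ‖b‖) 1 = (p : ℝ) ^ n ∧ (n = 0 ∨ ‖a‖ = (p : ℝ) ^ n ∨ ‖b‖ = (p : ℝ) ^ n) := by
  have h1 : 1 ≤ max (max ‖a‖ ‖b‖) 1 := le_max_right _ _
  rcases max_choice (max ‖a‖ ‖b‖) 1 with hm | hm <;> rw [hm] at h1 ⊢
  · rcases max_choice ‖a‖ ‖b‖ with hab | hab <;> rw [hab] at h1 ⊢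
    · obtain ⟨n, hn⟩ := exists_norm_eq_pow_of_one_le h1
      exact ⟨n, hn, .inr (.inl hn)⟩
    · obtain ⟨n, hn⟩ := exists_norm_eq_pow_of_one_le h1
      exact ⟨n, hn, .inr (.inr hn)⟩
  · exact ⟨0, by simp, .inl rfl⟩

end Padic

/-- The paper's `p^{-v(x)}` is the `p`-adic norm `‖x‖`. -/
theorem heisenberg_relindex_conj (p : ℕ) [Fact p.Prime] (a b α : ℚ_[p]) :
    ((conjSubgroup (⟨a, b, α⟩ : Heisenberg ℚ_[p]) (heisenbergInt p)).relIndex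
        (heisenbergInt p) : ℝ) = max (max ‖a‖ ‖b‖) 1 := by
  obtain ⟨n, hmax, hn⟩ := exists_max_norm_eq_pow a b
  obtain ⟨a', ha', ha'_unit⟩ :=
    exists_scaled_padicInt (hmax ▸ (le_max_left _ _).trans (le_max_left _ _) : ‖a‖ ≤ p ^ n)
  obtain ⟨b', hb', hb'_unit⟩ :=
    exists_scaled_padicInt (hmax ▸ (le_max_right _ _).trans (le_max_left _ _) : ‖b‖ ≤ p ^ n)
  rw [relIndex_conjSubgroup_heisenbergInt (g := ⟨a, b, α⟩) ha' hb',
    index_ker_symplecticHomMod (hn.imp_right (Or.imp ha'_unit hb'_unit)), hmax, Nat.cast_pow]
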